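/- For each natural number r and each complex number z, ∫₀¹ |f_{r,z}(t)|² dt ≥ |Σ_{j=0}^{r+2} z^j/j!|², where f_{r,z}(t) = Σ_{j=0}^{r+1} z^j/j! + t^{r+1} z^{r+2}/(r+1)!. Consequently, the mean-square stability region R_MS^r = {z : ∫₀¹ |f_{r,z}(t)|² dt < 1} is contained in the reference region R_ref^r = {z : |Σ_{j=0}^{r+2} z^j/j!| < 1}. -/

import Mathlib

open MeasureTheory Finset

noncomputable def fT (r : ℕ) (z : ℂ) (t : ℝ) : ℂ :=
  (∑ j ∈ Finset.range (r + 2), z ^ j / (j.factorial : ℂ)) +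
    (t : ℂ) ^ (r + 1) * z ^ (r + 2) / ((r + 1).factorial : ℂ)

noncomputable def Fms (r : ℕ) (z : ℂ) : ℝ :=
  ∫ t in (0:ℝ)..1, (‖fT r z t‖) ^ 2

noncomputable def Gas (r : ℕ) (z : ℂ) : ℝ :=
  ∫ t in (0:ℝ)..1, Real.log (‖fT r z t‖)

/-! By Jensen's inequality for the convex function `‖·‖ ^ 2` and the uniform probability on
`[0, 1]`, `‖∫₀¹ f‖² ≤ ∫₀¹ ‖f‖²`. Since `∫₀¹ t ^ (r + 1) dt = 1 / (r + 2)`, the mean of `fT r z`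
over `[0, 1]` is the Taylor polynomial `∑_{j ≤ r + 2} z ^ j / j!`. -/

theorem sq_norm_integral_le_integral_sq_norm {α E : Type*} [MeasurableSpace α] {μ : Measure α}
    [IsProbabilityMeasure μ] [NormedAddCommGroup E] [NormedSpace ℝ E] [CompleteSpace E]
    {f : α → E} (hf : Integrable f μ) (hf2 : Integrable (fun x ↦ ‖f x‖ ^ 2) μ) :
    ‖∫ x, f x ∂μ‖ ^ 2 ≤ ∫ x, ‖f x‖ ^ 2 ∂μ :=
  (convexOn_univ_norm.pow (fun _ _ ↦ norm_nonneg _) 2).map_integral_le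
    (continuous_norm.pow 2).continuousOn isClosed_univ (by simp) hf hf2

theorem sq_norm_intervalIntegral_zero_one_le {E : Type*} [NormedAddCommGroup E]
    [NormedSpace ℝ E] [CompleteSpace E] {f : ℝ → E} (hf : IntervalIntegrable f volume 0 1)
    (hf2 : IntervalIntegrable (fun t ↦ ‖f t‖ ^ 2) volume 0 1) :
    ‖∫ t in (0:ℝ)..1, f t‖ ^ 2 ≤ ∫ t in (0:ℝ)..1, ‖f t‖ ^ 2 := by
  have : IsProbabilityMeasure (volume.restrict (Set.Ioc (0:ℝ) 1)) := ⟨by simp⟩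
  simp only [intervalIntegral.integral_of_le zero_le_one]
  exact sq_norm_integral_le_integral_sq_norm hf.1 hf2.1

theorem continuous_fT (r : ℕ) (z : ℂ) : Continuous (fT r z) := by
  unfold fT; fun_prop

theorem integral_fT (r : ℕ) (z : ℂ) :
    ∫ t in (0:ℝ)..1, fT r z t = ∑ j ∈ range (r + 3), z ^ j / (j.factorial : ℂ) := by
  have hpow : ∫ t in (0:ℝ)..1, (t : ℂ) ^ (r + 1) = 1 / (r + 2) := by
    have := intervalIntegral.integral_ofReal (a := 0) (b := 1) (μ := volume)
      (f := fun t ↦ t ^ (r + 1))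
    simp only [Complex.ofReal_pow, integral_pow] at this
    rw [this]; push_cast; ring
  have hfac : ((r + 2).factorial : ℂ) = (r + 2) * (r + 1).factorial := by
    push_cast [Nat.factorial_succ]; ring
  simp only [fT, mul_div_assoc]
  rw [intervalIntegral.integral_add intervalIntegrable_const
      (((by fun_prop : Continuous fun t : ℝ ↦ (t : ℂ) ^ (r + 1)).intervalIntegrable _ _).mul_const
        _),
    intervalIntegral.integral_mul_const, intervalIntegral.integral_const, hpow,
    sum_range_succ _ (r + 2), hfac, sub_zero, one_smul, div_mul_div_comm, one_mul]

theorem sq_norm_sum_range_le_Fms (r : ℕ) (z : ℂ) :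
    ‖∑ j ∈ range (r + 3), z ^ j / (j.factorial : ℂ)‖ ^ 2 ≤ Fms r z := by
  rw [← integral_fT]
  exact sq_norm_intervalIntegral_zero_one_le ((continuous_fT r z).intervalIntegrable _ _)
    (((continuous_fT r z).norm.pow 2).intervalIntegrable _ _)

theorem stmt10 (r : ℕ) :
    (∀ z : ℂ, (‖∑ j ∈ Finset.range (r + 3), z ^ j / (j.factorial : ℂ)‖) ^ 2
        ≤ Fms r z) ∧
    {z : ℂ | Fms r z < 1} ⊆
      {z : ℂ | ‖∑ j ∈ Finset.range (r + 3), z ^ j / (j.factorial : ℂ)‖ < 1} :=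
  ⟨sq_norm_sum_range_le_Fms r, fun z hz ↦
    (sq_lt_one_iff₀ (norm_nonneg _)).1 ((sq_norm_sum_range_le_Fms r z).trans_lt hz)⟩
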